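/- Let d ≥ 1 and 1 < r < p < ∞, and let q be defined by 1/q = (1/r - 1/p)·(d/2). Then there exists a constant C = C(d, p, r) > 0 such that for every v ∈ L^r(ℝ^d), every T > 0 and every λ > 0, λ · ( Leb{ t ∈ (0, T) : ‖g_t ⋆ v‖_{L^p(ℝ^d)} > λ } )^{1/q} ≤ C · ‖v‖_{L^r(ℝ^d)}, where Leb denotes one-dimensional Lebesgue measure. -/

import Mathlib

open MeasureTheory ENNReal

noncomputable section

/-- The Gaussian heat kernel on `ℝ^d`: `g_t(x) = (4πt)^{-d/2} exp(-‖x‖²/(4t))`. -/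
def heatKernel (d : ℕ) (t : ℝ) (x : EuclideanSpace ℝ (Fin d)) : ℝ :=
  (4 * Real.pi * t) ^ (-(d : ℝ) / 2) * Real.exp (-‖x‖ ^ 2 / (4 * t))

/-- Convolution of the heat kernel with a function `v`:
`(g_t ⋆ v)(x) = ∫ g_t(x - y) v(y) dy`. -/
def heatConv (d : ℕ) (t : ℝ) (v : EuclideanSpace ℝ (Fin d) → ℝ)
    (x : EuclideanSpace ℝ (Fin d)) : ℝ :=
  ∫ y, heatKernel d t (x - y) * v y

lemma heatKernel_pos {d : ℕ} {t : ℝ} (ht : 0 < t) (x : EuclideanSpace ℝ (Fin d)) :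
    0 < heatKernel d t x := by
  unfold heatKernel
  have h1 : (0:ℝ) < 4 * Real.pi * t := by positivity
  positivity

lemma heatKernel_continuous {d : ℕ} {t : ℝ} : Continuous (heatKernel d t) := by
  unfold heatKernel
  fun_prop

lemma lintegral_shift {d : ℕ} (f : EuclideanSpace ℝ (Fin d) → ℝ≥0∞)
    (x : EuclideanSpace ℝ (Fin d)) : ∫⁻ y, f (x - y) = ∫⁻ y, f y := by
  calc ∫⁻ y, f (x - y)
      = ∫⁻ y, f (MeasurableEquiv.subLeft x y) := rfl
    _ = ∫⁻ z, f z ∂(Measure.map (MeasurableEquiv.subLeft x) volume) :=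
        (lintegral_map_equiv f _).symm
    _ = ∫⁻ y, f y := by
        rw [show (⇑(MeasurableEquiv.subLeft x) : EuclideanSpace ℝ (Fin d) → _) = fun y => x - y
          from rfl, Measure.map_sub_left_eq_self volume x]

lemma integrable_gauss {d : ℕ} {b : ℝ} (hb : 0 < b) :
    Integrable (fun x : EuclideanSpace ℝ (Fin d) => Real.exp (-b * ‖x‖ ^ 2)) := by
  have h := (GaussianFourier.integrable_cexp_neg_mul_sq_norm_add (V := EuclideanSpace ℝ (Fin d))
    (b := (b : ℂ)) (by simpa using hb) 0 (0 : EuclideanSpace ℝ (Fin d))).norm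
  refine h.congr (Filter.Eventually.of_forall fun x => ?_)
  simp [Complex.norm_exp, ← Complex.ofReal_pow]

lemma gauss_lintegral (d : ℕ) {t s : ℝ} (ht : 0 < t) (hs : 0 < s) :
    ∫⁻ x : EuclideanSpace ℝ (Fin d), ENNReal.ofReal (heatKernel d t x) ^ s
      = ENNReal.ofReal ((4 * Real.pi * t) ^ (-(d : ℝ) / 2 * s)
          * (4 * Real.pi * t / s) ^ ((d : ℝ) / 2)) := by
  have hπt : (0:ℝ) < 4 * Real.pi * t := by positivity
  have hb : (0:ℝ) < s / (4 * t) := by positivity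
  have hA : (0:ℝ) < (4 * Real.pi * t) ^ (-(d : ℝ) / 2 * s) := Real.rpow_pos_of_pos hπt _
  have step : ∀ x : EuclideanSpace ℝ (Fin d), ENNReal.ofReal (heatKernel d t x) ^ s
      = ENNReal.ofReal ((4 * Real.pi * t) ^ (-(d : ℝ) / 2 * s))
          * ENNReal.ofReal (Real.exp (-(s / (4 * t)) * ‖x‖ ^ 2)) := by
    intro x
    rw [← ENNReal.ofReal_mul hA.le, ENNReal.ofReal_rpow_of_pos (heatKernel_pos ht x)]
    congr 1
    unfold heatKernel
    rw [Real.mul_rpow (Real.rpow_nonneg hπt.le _) (Real.exp_nonneg _),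
      ← Real.rpow_mul hπt.le, ← Real.exp_mul]
    congr 1
    field_simp
  simp_rw [step]
  rw [lintegral_const_mul' _ _ ENNReal.ofReal_ne_top,
    ← ofReal_integral_eq_lintegral_ofReal (integrable_gauss hb)
      (Filter.Eventually.of_forall fun x => Real.exp_nonneg _),
    GaussianFourier.integral_rexp_neg_mul_sq_norm hb, ← ENNReal.ofReal_mul hA.le]
  congr 1
  rw [show Real.pi / (s / (4 * t)) = 4 * Real.pi * t / s from by field_simp]
  simp [finrank_euclideanSpace_fin]

lemma gauss_one (d : ℕ) {t : ℝ} (ht : 0 < t) :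
    ∫⁻ x : EuclideanSpace ℝ (Fin d), ENNReal.ofReal (heatKernel d t x) = 1 := by
  have hπt : (0:ℝ) < 4 * Real.pi * t := by positivity
  have h := gauss_lintegral d ht one_pos
  simp only [ENNReal.rpow_one, div_one, mul_one] at h
  rw [h, ← Real.rpow_add hπt, show (-(d:ℝ)/2 + (d:ℝ)/2) = 0 by ring, Real.rpow_zero,
    ENNReal.ofReal_one]

lemma smoothing (d : ℕ) {r p : ℝ} (hr : 1 < r) (hrp : r < p) {t : ℝ} (ht : 0 < t)
    (v : EuclideanSpace ℝ (Fin d) → ℝ) (hv : Measurable v) :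
    eLpNorm' (heatConv d t v) p volume ≤
      (∫⁻ z : EuclideanSpace ℝ (Fin d), ENNReal.ofReal (heatKernel d t z) ^ (r / (r - 1)))
          ^ ((p - r) / ((r / (r - 1)) * p))
        * eLpNorm' v r volume := by
  set c : ℝ := r / (r - 1) with hc
  have hrc : r.HolderConjugate c := Real.HolderConjugate.conjExponent hr
  have hcr : c.HolderConjugate r := hrc.symm
  have hr0 : (0:ℝ) < r := hrc.pos
  have hc0 : (0:ℝ) < c := hcr.pos
  have hp0 : (0:ℝ) < p := lt_trans hr0 hrp
  have hpr : (0:ℝ) < p - r := sub_pos.mpr hrp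
  set K : EuclideanSpace ℝ (Fin d) → ℝ≥0∞ := fun z => ENNReal.ofReal (heatKernel d t z) with hK
  have hKm : Measurable K := heatKernel_continuous.measurable.ennreal_ofReal
  have hK0 : ∀ z, K z ≠ 0 := fun z => (ENNReal.ofReal_pos.mpr (heatKernel_pos ht z)).ne'
  have hKtop : ∀ z, K z ≠ ∞ := fun z => ENNReal.ofReal_ne_top
  have hK1 : ∫⁻ z, K z = 1 := gauss_one d ht
  set Φ : EuclideanSpace ℝ (Fin d) → ℝ≥0∞ := fun y => (‖v y‖₊ : ℝ≥0∞) with hΦ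
  have hΦm : Measurable Φ := hv.nnnorm.coe_nnreal_ennreal
  set Kc := ∫⁻ z, K z ^ c with hKc
  set Ir := ∫⁻ y, Φ y ^ r with hIr
  have honec : (1:ℝ)/c + 1/r = 1 := by simpa [one_div, add_comm] using hrc.inv_add_inv_eq_one
  have hpt : ∀ x, (‖heatConv d t v x‖₊ : ℝ≥0∞) ≤ ∫⁻ y, K (x - y) * Φ y := by
    intro x
    refine le_trans (enorm_integral_le_lintegral_enorm _) (le_of_eq ?_)
    refine lintegral_congr fun y => ?_
    rw [enorm_mul, Real.enorm_eq_ofReal (heatKernel_pos ht _).le]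
    rfl
  have hsup : ∀ x, (∫⁻ y, K (x - y) * Φ y) ≤ Kc ^ ((1:ℝ)/c) * Ir ^ ((1:ℝ)/r) := by
    intro x
    have hH := ENNReal.lintegral_mul_le_Lp_mul_Lq volume hcr
      (f := fun y => K (x - y)) (g := Φ)
      ((hKm.comp (measurable_const.sub measurable_id)).aemeasurable) hΦm.aemeasurable
    rw [lintegral_shift (fun z => K z ^ c) x] at hH
    simpa [Pi.mul_apply, one_div] using hH
  have hLr : ∀ x, (∫⁻ y, K (x - y) * Φ y) ^ r ≤ ∫⁻ y, K (x - y) * Φ y ^ r := by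
    intro x
    have hsplit : ∀ y, K (x - y) * Φ y
        = (K (x - y) ^ ((1:ℝ)/c)) * (K (x - y) ^ ((1:ℝ)/r) * Φ y) := by
      intro y
      rw [← mul_assoc, ← ENNReal.rpow_add _ _ (hK0 _) (hKtop _), honec, ENNReal.rpow_one]
    have hKxm : Measurable fun y : EuclideanSpace ℝ (Fin d) => K (x - y) :=
      hKm.comp (measurable_const.sub measurable_id)
    have hH := ENNReal.lintegral_mul_le_Lp_mul_Lq volume hcr
      (f := fun y => K (x - y) ^ ((1:ℝ)/c)) (g := fun y => K (x - y) ^ ((1:ℝ)/r) * Φ y)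
      ((ENNReal.continuous_rpow_const.measurable.comp hKxm).aemeasurable)
      (((ENNReal.continuous_rpow_const.measurable.comp hKxm).mul hΦm).aemeasurable)
    have e1 : ∀ y : EuclideanSpace ℝ (Fin d), (K (x - y) ^ ((1:ℝ)/c)) ^ c = K (x - y) := by
      intro y; rw [← ENNReal.rpow_mul, one_div_mul_cancel hc0.ne', ENNReal.rpow_one]
    have e2 : ∀ y : EuclideanSpace ℝ (Fin d),
        (K (x - y) ^ ((1:ℝ)/r) * Φ y) ^ r = K (x - y) * Φ y ^ r := by
      intro y
      rw [ENNReal.mul_rpow_of_nonneg _ _ hr0.le, ← ENNReal.rpow_mul,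
        one_div_mul_cancel hr0.ne', ENNReal.rpow_one]
    have key : (∫⁻ y, K (x - y) * Φ y) ≤ (∫⁻ y, K (x - y) * Φ y ^ r) ^ ((1:ℝ)/r) := by
      calc ∫⁻ y, K (x - y) * Φ y
          = ∫⁻ y, ((fun y => K (x - y) ^ ((1:ℝ)/c)) * fun y => K (x - y) ^ ((1:ℝ)/r) * Φ y) y :=
            lintegral_congr fun y => by simpa [Pi.mul_apply] using hsplit y
        _ ≤ (∫⁻ y, (K (x - y) ^ ((1:ℝ)/c)) ^ c) ^ ((1:ℝ)/c)
              * (∫⁻ y, (K (x - y) ^ ((1:ℝ)/r) * Φ y) ^ r) ^ ((1:ℝ)/r) := by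
            simpa [one_div] using hH
        _ = (∫⁻ y, K (x - y)) ^ ((1:ℝ)/c) * (∫⁻ y, K (x - y) * Φ y ^ r) ^ ((1:ℝ)/r) := by
            simp_rw [e1, e2]
        _ = (∫⁻ y, K (x - y) * Φ y ^ r) ^ ((1:ℝ)/r) := by
            rw [lintegral_shift (fun z => K z) x, hK1, ENNReal.one_rpow, one_mul]
    calc (∫⁻ y, K (x - y) * Φ y) ^ r ≤ ((∫⁻ y, K (x - y) * Φ y ^ r) ^ ((1:ℝ)/r)) ^ r :=
          ENNReal.rpow_le_rpow key hr0.le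
      _ = _ := by rw [← ENNReal.rpow_mul, one_div_mul_cancel hr0.ne', ENNReal.rpow_one]
  have hFm : Measurable (Function.uncurry
      fun (x y : EuclideanSpace ℝ (Fin d)) => K (x - y) * Φ y ^ r) := by
    apply Measurable.mul
    · exact hKm.comp (measurable_fst.sub measurable_snd)
    · exact ENNReal.continuous_rpow_const.measurable.comp (hΦm.comp measurable_snd)
  have hswap : ∫⁻ x, ∫⁻ y, K (x - y) * Φ y ^ r = Ir := by
    rw [lintegral_lintegral_swap hFm.aemeasurable]
    have h1 : ∀ y, ∫⁻ x, K (x - y) * Φ y ^ r = Φ y ^ r := by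
      intro y
      rw [lintegral_mul_const' _ _ (ENNReal.rpow_ne_top_of_nonneg hr0.le ENNReal.coe_ne_top),
        lintegral_sub_right_eq_self (fun z => K z) y, hK1, one_mul]
    simp_rw [h1]
    rfl
  have hinner : Measurable fun x => ∫⁻ y, K (x - y) * Φ y ^ r :=
    Measurable.lintegral_prod_right hFm
  set B := Kc ^ ((1:ℝ)/c) * Ir ^ ((1:ℝ)/r) with hB
  have key : ∫⁻ x, (‖heatConv d t v x‖₊ : ℝ≥0∞) ^ p ≤ B ^ (p - r) * Ir := by
    calc ∫⁻ x, (‖heatConv d t v x‖₊ : ℝ≥0∞) ^ p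
        = ∫⁻ x, (‖heatConv d t v x‖₊ : ℝ≥0∞) ^ (p - r) * (‖heatConv d t v x‖₊ : ℝ≥0∞) ^ r :=
          lintegral_congr fun x => by
            rw [← ENNReal.rpow_add_of_nonneg _ _ hpr.le hr0.le, sub_add_cancel]
      _ ≤ ∫⁻ x, B ^ (p - r) * ∫⁻ y, K (x - y) * Φ y ^ r := by
          refine lintegral_mono fun x => mul_le_mul' ?_ ?_
          · exact ENNReal.rpow_le_rpow (le_trans (hpt x) (hsup x)) hpr.le
          · exact le_trans (ENNReal.rpow_le_rpow (hpt x) hr0.le) (hLr x)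
      _ = B ^ (p - r) * ∫⁻ x, ∫⁻ y, K (x - y) * Φ y ^ r :=
          lintegral_const_mul'' _ hinner.aemeasurable
      _ = B ^ (p - r) * Ir := by rw [hswap]
  have hfin : eLpNorm' (heatConv d t v) p volume ≤ (B ^ (p - r) * Ir) ^ ((1:ℝ)/p) := by
    rw [eLpNorm']
    exact ENNReal.rpow_le_rpow key (by positivity)
  refine le_trans hfin (le_of_eq ?_)
  rw [eLpNorm', hB,
    ENNReal.mul_rpow_of_nonneg _ _ (by positivity : (0:ℝ) ≤ 1/p),
    ENNReal.mul_rpow_of_nonneg _ _ (sub_nonneg.mpr hrp.le),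
    ← ENNReal.rpow_mul Kc, ← ENNReal.rpow_mul Ir,
    ENNReal.mul_rpow_of_nonneg _ _ (by positivity : (0:ℝ) ≤ 1/p),
    ← ENNReal.rpow_mul Kc, ← ENNReal.rpow_mul Ir, mul_assoc,
    ← ENNReal.rpow_add_of_nonneg (x := Ir) _ _ (by positivity) (by positivity)]
  have e1 : 1 / c * (p - r) * (1 / p) = (p - r) / (c * p) := by field_simp
  have e2 : 1 / r * (p - r) * (1 / p) + 1 / p = 1 / r := by field_simp; ring
  rw [e1, e2]
  rfl

/-- Weak-type (Marcinkiewicz) endpoint bound: for `1/q = (1/r - 1/p)(d/2)`,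
`λ · Leb{t ∈ (0,T) : ‖g_t ⋆ v‖_{L^p} > λ}^{1/q} ≤ C ‖v‖_{L^r}` with `C = C(d, p, r)`. -/
theorem heat_semigroup_weak_Lq_estimate (d : ℕ) (hd : 1 ≤ d) (r p q : ℝ)
    (hr : 1 < r) (hrp : r < p) (hq : 1 / q = (1 / r - 1 / p) * ((d : ℝ) / 2)) :
    ∃ C : ℝ, 0 < C ∧ ∀ v : EuclideanSpace ℝ (Fin d) → ℝ,
      MemLp v (ENNReal.ofReal r) volume →
      ∀ T : ℝ, 0 < T → ∀ lam : ℝ, 0 < lam →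
      ENNReal.ofReal lam *
          (volume {t ∈ Set.Ioo (0 : ℝ) T |
            ENNReal.ofReal lam <
              eLpNorm (heatConv d t v) (ENNReal.ofReal p) volume}) ^ (1 / q) ≤
        ENNReal.ofReal C * eLpNorm v (ENNReal.ofReal r) volume := by
  have hr0 : (0:ℝ) < r := lt_trans one_pos hr
  have hp0 : (0:ℝ) < p := by linarith
  have hr1 : (0:ℝ) < r - 1 := by linarith
  set c : ℝ := r / (r - 1) with hc
  have hc0 : (0:ℝ) < c := by positivity
  set m : ℝ := (p - r) / (c * p) with hm
  have hpr : (0:ℝ) < p - r := by linarith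
  have hm0 : (0:ℝ) < m := by positivity
  have hd0 : (0:ℝ) < (d:ℝ) := by exact_mod_cast Nat.lt_of_lt_of_le Nat.zero_lt_one hd
  have hq0 : (0:ℝ) < 1/q := by
    rw [hq]
    have h1 : 1/p < 1/r := one_div_lt_one_div_of_lt hr0 hrp
    have h2 : (0:ℝ) < 1/r - 1/p := by linarith
    positivity
  have hqpos : (0:ℝ) < q := one_div_pos.mp hq0
  have h4π : (0:ℝ) < 4 * Real.pi := by positivity
  set C1 : ℝ := ((4*Real.pi) ^ (-(d:ℝ)/2*c) * (4*Real.pi/c) ^ ((d:ℝ)/2)) ^ m with hC1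
  have hC1pos : 0 < C1 := by
    have h1 : (0:ℝ) < (4*Real.pi) ^ (-(d:ℝ)/2*c) := Real.rpow_pos_of_pos h4π _
    have h2 : (0:ℝ) < (4*Real.pi/c) ^ ((d:ℝ)/2) := Real.rpow_pos_of_pos (by positivity) _
    exact Real.rpow_pos_of_pos (by positivity) _
  refine ⟨C1, hC1pos, ?_⟩
  intro v hv T hT lam hlam
  set w : EuclideanSpace ℝ (Fin d) → ℝ := hv.1.mk v with hw
  have hwm : Measurable w := hv.1.stronglyMeasurable_mk.measurable
  have hvw : v =ᵐ[volume] w := hv.1.ae_eq_mk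
  have hconv : ∀ t' : ℝ, heatConv d t' v = heatConv d t' w := by
    intro t'
    funext x
    exact integral_congr_ae (hvw.mono fun y hy => by dsimp only; rw [hy])
  have hsn : eLpNorm v (ENNReal.ofReal r) volume = eLpNorm w (ENNReal.ofReal r) volume :=
    eLpNorm_congr_ae hvw
  set N := eLpNorm w (ENNReal.ofReal r) volume with hN
  have hNfin : N ≠ ⊤ := by rw [← hsn]; exact hv.2.ne
  have hrne0 : ENNReal.ofReal r ≠ 0 := by
    simp only [ne_eq, ENNReal.ofReal_eq_zero, not_le]; exact hr0
  have hpne0 : ENNReal.ofReal p ≠ 0 := by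
    simp only [ne_eq, ENNReal.ofReal_eq_zero, not_le]; exact hp0
  have hconv_bound : ∀ t' : ℝ, 0 < t' →
      eLpNorm (heatConv d t' v) (ENNReal.ofReal p) volume
        ≤ ENNReal.ofReal (C1 * t' ^ (-(1/q))) * N := by
    intro t' ht'
    have h1 : eLpNorm (heatConv d t' v) (ENNReal.ofReal p) volume
        = eLpNorm' (heatConv d t' w) p volume := by
      rw [hconv t', eLpNorm_eq_eLpNorm' hpne0 ENNReal.ofReal_ne_top,
        ENNReal.toReal_ofReal hp0.le]
    have h2 : N = eLpNorm' w r volume := by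
      rw [hN, eLpNorm_eq_eLpNorm' hrne0 ENNReal.ofReal_ne_top, ENNReal.toReal_ofReal hr0.le]
    rw [h1, h2]
    refine le_trans (smoothing d hr hrp ht' w hwm) (le_of_eq ?_)
    congr 1
    -- compute the Gaussian factor
    have hgauss := gauss_lintegral d ht' hc0
    have hapos : (0:ℝ) < (4*Real.pi*t') ^ (-(d:ℝ)/2*c) * (4*Real.pi*t'/c) ^ ((d:ℝ)/2) := by
      have h1 : (0:ℝ) < (4*Real.pi*t') ^ (-(d:ℝ)/2*c) := Real.rpow_pos_of_pos (by positivity) _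
      have h2 : (0:ℝ) < (4*Real.pi*t'/c) ^ ((d:ℝ)/2) := Real.rpow_pos_of_pos (by positivity) _
      positivity
    rw [hgauss, ENNReal.ofReal_rpow_of_pos hapos]
    congr 1
    have e1 : (4*Real.pi*t') ^ (-(d:ℝ)/2*c)
        = (4*Real.pi) ^ (-(d:ℝ)/2*c) * t' ^ (-(d:ℝ)/2*c) := Real.mul_rpow h4π.le ht'.le
    have e2 : (4*Real.pi*t'/c) ^ ((d:ℝ)/2)
        = (4*Real.pi/c) ^ ((d:ℝ)/2) * t' ^ ((d:ℝ)/2) := by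
      rw [show 4*Real.pi*t'/c = (4*Real.pi/c)*t' from by ring]
      exact Real.mul_rpow (by positivity) ht'.le
    have e3 : (4*Real.pi*t') ^ (-(d:ℝ)/2*c) * (4*Real.pi*t'/c) ^ ((d:ℝ)/2)
        = ((4*Real.pi) ^ (-(d:ℝ)/2*c) * (4*Real.pi/c) ^ ((d:ℝ)/2))
            * t' ^ (-(d:ℝ)/2*c + (d:ℝ)/2) := by
      rw [e1, e2, Real.rpow_add ht']
      ring
    rw [e3, Real.mul_rpow (by positivity) (Real.rpow_nonneg ht'.le _),
      ← Real.rpow_mul ht'.le, ← hC1]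
    have h1 : r - 1 ≠ 0 := hr1.ne'
    have h2 : r ≠ 0 := hr0.ne'
    have h3 : p ≠ 0 := hp0.ne'
    have hexp : (-(d:ℝ)/2*c + (d:ℝ)/2) * ((p - r)/(r/(r-1)*p))
        = -((1/r - 1/p)*((d:ℝ)/2)) := by
      rw [hc]
      field_simp
      ring
    rw [hq, hexp]
  set S := {t ∈ Set.Ioo (0 : ℝ) T |
    ENNReal.ofReal lam < eLpNorm (heatConv d t v) (ENNReal.ofReal p) volume} with hS
  rcases eq_or_ne N 0 with hN0 | hN0
  · have hempty : S = ∅ := by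
      ext t'
      simp only [hS, Set.mem_setOf_eq, Set.mem_sep_iff, Set.mem_empty_iff_false, iff_false,
        not_and]
      intro ht' hlt
      have hb := hconv_bound t' ht'.1
      rw [hN0, mul_zero] at hb
      exact absurd (lt_of_lt_of_le hlt hb) (by simp)
    rw [hempty]
    simp only [measure_empty]
    rw [ENNReal.zero_rpow_of_pos hq0, mul_zero]
    exact zero_le
  · have hNpos : 0 < N.toReal := ENNReal.toReal_pos hN0 hNfin
    set n := N.toReal with hn
    have hRpos : (0:ℝ) < C1 * n / lam := by positivity
    set R := (C1 * n / lam) ^ q with hR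
    have hRpos' : (0:ℝ) < R := Real.rpow_pos_of_pos hRpos _
    have hsub : S ⊆ Set.Ioo 0 R := by
      rintro t' ⟨ht', hlt⟩
      refine ⟨ht'.1, ?_⟩
      have hb := hconv_bound t' ht'.1
      have hlt2 : ENNReal.ofReal lam < ENNReal.ofReal (C1 * t' ^ (-(1/q)) * n) := by
        refine lt_of_lt_of_le hlt (le_trans hb (le_of_eq ?_))
        rw [← ENNReal.ofReal_toReal hNfin, ← hn,
          ← ENNReal.ofReal_mul (mul_nonneg hC1pos.le (Real.rpow_nonneg ht'.1.le _))]
      have hreal : lam < C1 * t' ^ (-(1/q)) * n :=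
        (ENNReal.ofReal_lt_ofReal_iff_of_nonneg hlam.le).mp hlt2
      have htpos : (0:ℝ) < t' := ht'.1
      have hpow : (0:ℝ) < t' ^ ((1:ℝ)/q) := Real.rpow_pos_of_pos htpos _
      have h1 : t' ^ ((1:ℝ)/q) * lam < C1 * n := by
        have hrw : t' ^ (-(1/q)) = (t' ^ ((1:ℝ)/q))⁻¹ := by
          rw [← Real.rpow_neg_one (t' ^ ((1:ℝ)/q)), ← Real.rpow_mul htpos.le]
          congr 1
          ring
        rw [hrw] at hreal
        calc t' ^ ((1:ℝ)/q) * lam < t' ^ ((1:ℝ)/q) * (C1 * (t' ^ ((1:ℝ)/q))⁻¹ * n) := by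
              rw [mul_comm (t' ^ ((1:ℝ)/q)) lam]
              exact mul_lt_mul_of_pos_right hreal hpow |>.trans_eq (by ring)
          _ = C1 * n := by field_simp
      have h2 : t' ^ ((1:ℝ)/q) < C1 * n / lam := by
        rw [lt_div_iff₀ hlam]; exact h1
      have h3 := Real.rpow_lt_rpow (Real.rpow_nonneg htpos.le _) h2 hqpos
      rwa [← Real.rpow_mul htpos.le, one_div_mul_cancel hqpos.ne', Real.rpow_one] at h3
    calc ENNReal.ofReal lam * (volume S) ^ (1/q)
        ≤ ENNReal.ofReal lam * (volume (Set.Ioo (0:ℝ) R)) ^ (1/q) :=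
          mul_le_mul_right (ENNReal.rpow_le_rpow (measure_mono hsub) hq0.le) _
      _ = ENNReal.ofReal lam * (ENNReal.ofReal R) ^ (1/q) := by
          rw [Real.volume_Ioo, sub_zero]
      _ = ENNReal.ofReal lam * ENNReal.ofReal (C1 * n / lam) := by
          rw [ENNReal.ofReal_rpow_of_pos hRpos', hR, ← Real.rpow_mul hRpos.le,
            mul_one_div_cancel hqpos.ne', Real.rpow_one]
      _ = ENNReal.ofReal (C1 * n) := by
          rw [← ENNReal.ofReal_mul hlam.le]
          congr 1
          field_simp
      _ = ENNReal.ofReal C1 * N := by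
          rw [ENNReal.ofReal_mul hC1pos.le, hn, ENNReal.ofReal_toReal hNfin]
      _ ≤ ENNReal.ofReal C1 * eLpNorm v (ENNReal.ofReal r) volume := by rw [hsn]
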